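/- Partitioned diagonalization of the Szegedy reflection: let Z_1, …, Z_M be a partition of {0,…,N−1} into nonempty disjoint subsets. For each x, fix b_x ∈ {0,…,N−1} and unitary N×N matrices U_{x,y} for y ∈ Z_x with U_{x,y} φ_y = e_{b_x}. Define U_x = Σ_{y ∈ Z_x} e_y e_y† ⊗ U_{x,y} + Σ_{y' ∉ Z_x} e_{y'} e_{y'}† ⊗ I_N and D_x = 2 (Σ_{y ∈ Z_x} e_y e_y†) ⊗ e_{b_x} e_{b_x}† − I. Then for each x, U_x† D_x U_x = 2Π_x − I where Π_x = Σ_{y ∈ Z_x} ψ_y ψ_y†, the Π_x are mutually orthogonal projections summing to Π, and consequently S ∏_{x=1}^{M} U_x† D_x U_x = (−1)^{M−1} U_walk. -/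

import Mathlib

open Matrix BigOperators

/-- The `i`-th column state of the transition matrix `P`: `(φ_i)_j = √(P_{j,i})`. -/
noncomputable def colState {N : ℕ} (P : Matrix (Fin N) (Fin N) ℝ) (i : Fin N) :
    Fin N → ℂ :=
  fun j => (Real.sqrt (P j i) : ℂ)

/-- The `i`-th projector state `ψ_i = e_i ⊗ φ_i ∈ ℂ^N ⊗ ℂ^N`. -/
noncomputable def projState {N : ℕ} (P : Matrix (Fin N) (Fin N) ℝ) (i : Fin N) :
    Fin N × Fin N → ℂ :=
  fun p => (if p.1 = i then 1 else 0) * colState P i p.2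

/-- The projection `Π = Σ_i ψ_i ψ_i†`, as a matrix on `ℂ^N ⊗ ℂ^N`. -/
noncomputable def szegedyProj {N : ℕ} (P : Matrix (Fin N) (Fin N) ℝ) :
    Matrix (Fin N × Fin N) (Fin N × Fin N) ℂ :=
  ∑ i : Fin N,
    Matrix.of (fun p q => projState P i p * (starRingEnd ℂ) (projState P i q))

/-- The partial projection `Π_x = Σ_{y ∈ Z_x} ψ_y ψ_y†` associated to a subset `Z_x`. -/
noncomputable def szegedyProjOn {N : ℕ} (P : Matrix (Fin N) (Fin N) ℝ)
    (Zx : Finset (Fin N)) : Matrix (Fin N × Fin N) (Fin N × Fin N) ℂ :=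
  ∑ y ∈ Zx,
    Matrix.of (fun p q => projState P y p * (starRingEnd ℂ) (projState P y q))

/-- The swap operator `S` on `ℂ^N ⊗ ℂ^N`, determined by `S(u ⊗ v) = v ⊗ u`. -/
def swapOp (N : ℕ) : Matrix (Fin N × Fin N) (Fin N × Fin N) ℂ :=
  Matrix.of (fun p q => if p.1 = q.2 ∧ p.2 = q.1 then 1 else 0)

/-- The operator `U_x = Σ_{y ∈ Z_x} e_y e_y† ⊗ U_{x,y} + Σ_{y' ∉ Z_x} e_{y'} e_{y'}† ⊗ I_N`. -/
def partBlock {N : ℕ} (Zx : Finset (Fin N)) (Uxy : Fin N → Matrix (Fin N) (Fin N) ℂ) :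
    Matrix (Fin N × Fin N) (Fin N × Fin N) ℂ :=
  Matrix.of (fun p q =>
    if p.1 = q.1 then
      (if p.1 ∈ Zx then Uxy p.1 p.2 q.2 else if p.2 = q.2 then 1 else 0)
    else 0)

/-- The operator `D_x = 2 (Σ_{y ∈ Z_x} e_y e_y†) ⊗ e_{b_x} e_{b_x}† − I`. -/
def partDiag {N : ℕ} (Zx : Finset (Fin N)) (bx : Fin N) :
    Matrix (Fin N × Fin N) (Fin N × Fin N) ℂ :=
  Matrix.of (fun p q =>
    2 * (if p.1 = q.1 ∧ p.1 ∈ Zx then 1 else 0) *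
        (if p.2 = bx then 1 else 0) * (if q.2 = bx then 1 else 0) -
      (if p = q then 1 else 0))

/-! With the block index in the first tensor factor, `U_x`, `D_x` and `Π_x` are block diagonal:
the block at `y ∈ Z_x` is `U_{x,y}`, `2 e_b e_b† − I`, `φ_y φ_y†` respectively, and `I`, `−I`, `0`
at `y ∉ Z_x`. A unitary with `U φ = e_b` has `U† e_b = φ`, so conjugation turns `e_b e_b†` into
`φ_y φ_y†`. The columns of `P` sum to one, so each `φ_y` is a unit vector and the `Π_x` are
orthogonal projections onto disjoint sets of blocks. Finally, for pairwise orthogonal `p_i`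
the cross terms in `∏ (1 − 2 p_i)` vanish, leaving `1 − 2 ∑ p_i`. -/

namespace Matrix

section BlockDiagonal

variable {m n α : Type*} [DecidableEq m]

/-- Mathlib's `blockDiagonal` puts the block index second; here it comes first. -/
def blockDiagFst [Zero α] (d : m → Matrix n n α) : Matrix (m × n) (m × n) α :=
  comp m m n n α (diagonal d)

@[simp]
theorem blockDiagFst_apply [Zero α] (d : m → Matrix n n α) (p q : m × n) :
    blockDiagFst d p q = if p.1 = q.1 then d p.1 p.2 q.2 else 0 := by
  simp [blockDiagFst, diagonal_apply, apply_ite (fun A : Matrix n n α => A p.2 q.2)]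

theorem blockDiagFst_mul [Fintype m] [Fintype n] [Semiring α] (d e : m → Matrix n n α) :
    blockDiagFst d * blockDiagFst e = blockDiagFst (d * e) := by
  simp only [blockDiagFst, ← compRingEquiv_apply, ← map_mul, diagonal_mul_diagonal]
  rfl

theorem blockDiagFst_one [DecidableEq n] [Zero α] [One α] :
    blockDiagFst (1 : m → Matrix n n α) = 1 := by
  rw [blockDiagFst, Pi.one_def, diagonal_one, comp_one]

theorem blockDiagFst_conjTranspose [AddMonoid α] [StarAddMonoid α] (d : m → Matrix n n α) :
    (blockDiagFst d)ᴴ = blockDiagFst fun i => (d i)ᴴ := by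
  ext p q
  simp only [conjTranspose_apply, blockDiagFst_apply, eq_comm (a := q.1)]
  split_ifs <;> simp_all

end BlockDiagonal

section RankOne

variable {n α : Type*}

theorem vecMulVec_mul_self_of_dotProduct_eq_one [Fintype n] [Semiring α] {v w : n → α}
    (h : w ⬝ᵥ v = 1) : vecMulVec v w * vecMulVec v w = vecMulVec v w := by
  rw [vecMulVec_mul_vecMulVec, h, one_smul]

theorem isHermitian_vecMulVec_star_self [Mul α] [StarMul α] (v : n → α) :
    (vecMulVec v (star v)).IsHermitian := by
  rw [IsHermitian, conjTranspose_vecMulVec, star_star]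

theorem conjTranspose_mul_vecMulVec_star_mul [Fintype n] [Semiring α] [StarRing α]
    (A : Matrix n n α) (w : n → α) :
    Aᴴ * vecMulVec w (star w) * A = vecMulVec (Aᴴ *ᵥ w) (star (Aᴴ *ᵥ w)) := by
  rw [mul_vecMulVec, vecMulVec_mul, star_mulVec, conjTranspose_conjTranspose]

theorem conjTranspose_mulVec_of_mulVec_eq [Fintype n] [DecidableEq n] [CommRing α] [StarRing α]
    {A : Matrix n n α} (hA : A ∈ unitaryGroup n α) {v w : n → α} (h : A *ᵥ v = w) :
    Aᴴ *ᵥ w = v := by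
  rw [← h, mulVec_mulVec, ← star_eq_conjTranspose, (mem_unitaryGroup_iff').mp hA, one_mulVec]

end RankOne

end Matrix

section Szegedy

variable {N : ℕ}

theorem star_colState_dotProduct_self (P : Matrix (Fin N) (Fin N) ℝ)
    (hnonneg : ∀ j i, 0 ≤ P j i) (hcol : ∀ i, ∑ j, P j i = 1) (i : Fin N) :
    star (colState P i) ⬝ᵥ colState P i = 1 := by
  have hsq : ∀ j, star (colState P i j) * colState P i j = (P j i : ℂ) := fun j => by
    rw [colState, Complex.star_def, Complex.conj_ofReal, ← Complex.ofReal_mul,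
      Real.mul_self_sqrt (hnonneg j i)]
  simp only [dotProduct, Pi.star_apply, hsq]
  exact_mod_cast hcol i

theorem szegedyProjOn_eq_blockDiagFst (P : Matrix (Fin N) (Fin N) ℝ) (s : Finset (Fin N)) :
    szegedyProjOn P s = blockDiagFst fun y =>
      if y ∈ s then vecMulVec (colState P y) (star (colState P y)) else 0 := by
  ext ⟨p1, p2⟩ ⟨q1, q2⟩
  simp only [szegedyProjOn, Matrix.sum_apply, of_apply, projState, map_mul, blockDiagFst_apply]
  rcases eq_or_ne p1 q1 with rfl | h
  · by_cases hs : p1 ∈ s <;> simp [hs, vecMulVec_apply, Finset.sum_ite_eq]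
  · simp [h, ite_mul, mul_ite, Finset.sum_ite_eq]

theorem szegedyProjOn_isHermitian (P : Matrix (Fin N) (Fin N) ℝ) (s : Finset (Fin N)) :
    (szegedyProjOn P s).IsHermitian := by
  rw [szegedyProjOn_eq_blockDiagFst, IsHermitian, blockDiagFst_conjTranspose]
  congr 1
  ext1 y
  split_ifs
  · exact isHermitian_vecMulVec_star_self _
  · exact conjTranspose_zero

theorem szegedyProj_eq_szegedyProjOn_univ (P : Matrix (Fin N) (Fin N) ℝ) :
    szegedyProj P = szegedyProjOn P Finset.univ :=
  rfl

theorem szegedyProjOn_mul {P : Matrix (Fin N) (Fin N) ℝ}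
    (hnorm : ∀ i, star (colState P i) ⬝ᵥ colState P i = 1) (s t : Finset (Fin N)) :
    szegedyProjOn P s * szegedyProjOn P t = szegedyProjOn P (s ∩ t) := by
  simp only [szegedyProjOn_eq_blockDiagFst, blockDiagFst_mul]
  congr 1
  ext1 y
  by_cases hs : y ∈ s <;> by_cases ht : y ∈ t <;>
    simp [hs, ht, vecMulVec_mul_self_of_dotProduct_eq_one (hnorm y)]

theorem sum_szegedyProjOn_eq_szegedyProj (P : Matrix (Fin N) (Fin N) ℝ) {ι : Type*} [Fintype ι]
    (Z : ι → Finset (Fin N)) (hdisj : ∀ x y, x ≠ y → Disjoint (Z x) (Z y)) (hcover : ∀ i, ∃ x, i ∈ Z x) :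
    ∑ x, szegedyProjOn P (Z x) = szegedyProj P := by
  have hunion : Finset.univ.biUnion Z = Finset.univ := by
    ext i
    simpa using hcover i
  rw [szegedyProj_eq_szegedyProjOn_univ, ← hunion, szegedyProjOn,
    Finset.sum_biUnion fun x _ y _ hxy => hdisj x y hxy]
  rfl

theorem partBlock_eq_blockDiagFst (s : Finset (Fin N)) (U : Fin N → Matrix (Fin N) (Fin N) ℂ) :
    partBlock s U = blockDiagFst fun y => if y ∈ s then U y else 1 := by
  ext p q
  simp only [partBlock, of_apply, blockDiagFst_apply]
  split_ifs <;> simp_all [one_apply]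

theorem partDiag_eq_blockDiagFst (s : Finset (Fin N)) (b : Fin N) :
    partDiag s b = (2 : ℂ) • blockDiagFst (fun y =>
      if y ∈ s then vecMulVec (Pi.single b 1) (star (Pi.single b 1)) else 0) - 1 := by
  ext ⟨p1, p2⟩ ⟨q1, q2⟩
  simp only [partDiag, of_apply, Matrix.sub_apply, Matrix.smul_apply, blockDiagFst_apply]
  rcases eq_or_ne p1 q1 with rfl | h
  · by_cases hs : p1 ∈ s <;> simp [hs, vecMulVec_apply, Pi.single_apply, one_apply]
  · simp [h, one_apply]

theorem conjTranspose_partBlock_mul_partDiag_mul_partBlock (P : Matrix (Fin N) (Fin N) ℝ)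
    (s : Finset (Fin N)) (b : Fin N) (U : Fin N → Matrix (Fin N) (Fin N) ℂ)
    (hU : ∀ y ∈ s, U y ∈ unitaryGroup (Fin N) ℂ)
    (hUφ : ∀ y ∈ s, U y *ᵥ colState P y = Pi.single b 1) :
    (partBlock s U)ᴴ * partDiag s b * partBlock s U = (2 : ℂ) • szegedyProjOn P s - 1 := by
  set V : Fin N → Matrix (Fin N) (Fin N) ℂ := fun y => if y ∈ s then U y else 1
  have hunitary : (blockDiagFst V)ᴴ * blockDiagFst V = 1 := by
    rw [blockDiagFst_conjTranspose, blockDiagFst_mul, ← blockDiagFst_one]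
    congr 1
    ext1 y
    by_cases hy : y ∈ s
    · simpa [V, hy, star_eq_conjTranspose] using (mem_unitaryGroup_iff').mp (hU y hy)
    · simp [V, hy]
  have hproj : (blockDiagFst V)ᴴ * blockDiagFst (fun y =>
      if y ∈ s then vecMulVec (Pi.single b 1) (star (Pi.single b 1)) else 0) * blockDiagFst V =
      szegedyProjOn P s := by
    rw [szegedyProjOn_eq_blockDiagFst, blockDiagFst_conjTranspose, blockDiagFst_mul,
      blockDiagFst_mul]
    congr 1
    ext1 y
    by_cases hy : y ∈ s
    · simp only [Pi.mul_apply, V, hy, if_true, conjTranspose_mul_vecMulVec_star_mul,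
        conjTranspose_mulVec_of_mulVec_eq (hU y hy) (hUφ y hy)]
    · simp [V, hy]
  rw [partBlock_eq_blockDiagFst, partDiag_eq_blockDiagFst, mul_sub, sub_mul, mul_one, hunitary,
    mul_smul_comm, smul_mul_assoc, hproj]

end Szegedy

section Reflections

variable {ι S R : Type*} [CommRing S] [Ring R] [Algebra S R]

theorem List.prod_map_one_sub_smul_of_pairwise_mul_eq_zero (c : S) (p : ι → R) :
    ∀ {L : List ι}, L.Pairwise (fun i j => p i * p j = 0) →
      (L.map fun i => 1 - c • p i).prod = 1 - c • (L.map p).sum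
  | [], _ => by simp
  | i :: L, h => by
    rw [List.pairwise_cons] at h
    have horth : p i * (L.map p).sum = 0 := by
      rw [← List.sum_map_mul_left, List.sum_eq_zero]
      simpa using h.1
    rw [List.map_cons, List.prod_cons, List.prod_map_one_sub_smul_of_pairwise_mul_eq_zero c p h.2,
      List.map_cons, List.sum_cons]
    calc (1 - c • p i) * (1 - c • (L.map p).sum)
        = 1 - c • p i - c • (L.map p).sum + (c * c) • (p i * (L.map p).sum) := by
          simp only [sub_mul, mul_sub, one_mul, mul_one, smul_mul_smul_comm]; abel
      _ = 1 - c • (p i + (L.map p).sum) := by rw [horth, smul_zero, smul_add]; abel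

theorem List.prod_map_smul_sub_one_of_pairwise_mul_eq_zero (c : S) (p : ι → R) {L : List ι}
    (h : L.Pairwise (fun i j => p i * p j = 0)) :
    (L.map fun i => c • p i - 1).prod = (-1 : S) ^ L.length • (1 - c • (L.map p).sum) := by
  have hneg : (L.map fun i => c • p i - 1) = (L.map fun i => 1 - c • p i).map Neg.neg := by
    simp [Function.comp_def]
  rw [hneg, List.prod_map_neg, List.prod_map_one_sub_smul_of_pairwise_mul_eq_zero c p h,
    List.length_map, Algebra.smul_def ((-1 : S) ^ L.length), map_pow, map_neg, map_one]

end Reflections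

theorem szegedyReflection_partitioned_diagonalization_general (N : ℕ)
    (P : Matrix (Fin N) (Fin N) ℝ)
    (hnonneg : ∀ j i, 0 ≤ P j i) (hcol : ∀ i, ∑ j, P j i = 1)
    (M : ℕ) (hM : 1 ≤ M)
    (Z : Fin M → Finset (Fin N))
    (hZdisj : ∀ x y, x ≠ y → Disjoint (Z x) (Z y))
    (hZcover : ∀ i : Fin N, ∃ x, i ∈ Z x)
    (b : Fin M → Fin N)
    (Uxy : Fin M → Fin N → Matrix (Fin N) (Fin N) ℂ)
    (hU : ∀ x, ∀ y ∈ Z x, Uxy x y ∈ Matrix.unitaryGroup (Fin N) ℂ)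
    (hUphi : ∀ x, ∀ y ∈ Z x, (Uxy x y).mulVec (colState P y) = Pi.single (b x) 1) :
    (∀ x, (partBlock (Z x) (Uxy x))ᴴ * partDiag (Z x) (b x) * partBlock (Z x) (Uxy x)
        = (2 : ℂ) • szegedyProjOn P (Z x) - 1) ∧
    (∀ x, (szegedyProjOn P (Z x)).IsHermitian ∧
        szegedyProjOn P (Z x) * szegedyProjOn P (Z x) = szegedyProjOn P (Z x)) ∧
    (∀ x y, x ≠ y → szegedyProjOn P (Z x) * szegedyProjOn P (Z y) = 0) ∧
    (∑ x, szegedyProjOn P (Z x) = szegedyProj P) ∧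
    swapOp N *
        ((List.finRange M).map
          (fun x => (partBlock (Z x) (Uxy x))ᴴ * partDiag (Z x) (b x) *
            partBlock (Z x) (Uxy x))).prod
      = ((-1 : ℂ) ^ (M - 1)) • (swapOp N * ((2 : ℂ) • szegedyProj P - 1)) := by
  have hnorm := star_colState_dotProduct_self P hnonneg hcol
  have hconj x := conjTranspose_partBlock_mul_partDiag_mul_partBlock P (Z x) (b x) (Uxy x)
    (hU x) (hUphi x)
  have horth : ∀ x y, x ≠ y → szegedyProjOn P (Z x) * szegedyProjOn P (Z y) = 0 := by
    intro x y hxy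
    rw [szegedyProjOn_mul hnorm, Finset.disjoint_iff_inter_eq_empty.mp (hZdisj x y hxy),
      szegedyProjOn, Finset.sum_empty]
  have hsum := sum_szegedyProjOn_eq_szegedyProj P Z hZdisj hZcover
  refine ⟨hconj, fun x => ⟨szegedyProjOn_isHermitian P (Z x), by
    rw [szegedyProjOn_mul hnorm, Finset.inter_self]⟩, horth, hsum, ?_⟩
  obtain ⟨k, rfl⟩ := Nat.exists_eq_add_of_le' hM
  rw [List.map_congr_left fun x _ => hconj x, List.prod_map_smul_sub_one_of_pairwise_mul_eq_zero
    _ _ ((List.nodup_finRange _).imp (horth _ _)), List.length_finRange, ← Fin.sum_univ_def, hsum,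
    pow_succ, mul_smul, neg_one_smul, neg_sub, mul_smul_comm, Nat.add_sub_cancel]

/-- Partitioned diagonalization of the Szegedy reflection: for a partition
`Z_1, …, Z_M` of `{0, …, N−1}` into nonempty disjoint subsets, with unitaries
`U_{x,y}` (for `y ∈ Z_x`) mapping `φ_y` to `e_{b_x}`, each conjugation
`U_x† D_x U_x` equals the reflection `2Π_x − I`; the `Π_x` are mutually orthogonal
projections summing to `Π`; and consequently
`S ∏_x U_x† D_x U_x = (−1)^(M−1) U_walk`. -/
theorem szegedyReflection_partitioned_diagonalization (N : ℕ) (hN : 1 ≤ N)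
    (P : Matrix (Fin N) (Fin N) ℝ)
    (hnonneg : ∀ j i, 0 ≤ P j i) (hcol : ∀ i, ∑ j, P j i = 1)
    (M : ℕ) (hM : 1 ≤ M)
    (Z : Fin M → Finset (Fin N))
    (hZne : ∀ x, (Z x).Nonempty)
    (hZdisj : ∀ x y, x ≠ y → Disjoint (Z x) (Z y))
    (hZcover : ∀ i : Fin N, ∃ x, i ∈ Z x)
    (b : Fin M → Fin N)
    (Uxy : Fin M → Fin N → Matrix (Fin N) (Fin N) ℂ)
    (hU : ∀ x, ∀ y ∈ Z x, Uxy x y ∈ Matrix.unitaryGroup (Fin N) ℂ)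
    (hUphi : ∀ x, ∀ y ∈ Z x, (Uxy x y).mulVec (colState P y) = Pi.single (b x) 1) :
    (∀ x, (partBlock (Z x) (Uxy x))ᴴ * partDiag (Z x) (b x) * partBlock (Z x) (Uxy x)
        = (2 : ℂ) • szegedyProjOn P (Z x) - 1) ∧
    (∀ x, (szegedyProjOn P (Z x)).IsHermitian ∧
        szegedyProjOn P (Z x) * szegedyProjOn P (Z x) = szegedyProjOn P (Z x)) ∧
    (∀ x y, x ≠ y → szegedyProjOn P (Z x) * szegedyProjOn P (Z y) = 0) ∧
    (∑ x, szegedyProjOn P (Z x) = szegedyProj P) ∧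
    swapOp N *
        ((List.finRange M).map
          (fun x => (partBlock (Z x) (Uxy x))ᴴ * partDiag (Z x) (b x) *
            partBlock (Z x) (Uxy x))).prod
      = ((-1 : ℂ) ^ (M - 1)) • (swapOp N * ((2 : ℂ) • szegedyProj P - 1)) :=
  szegedyReflection_partitioned_diagonalization_general N P hnonneg hcol M hM Z hZdisj hZcover b Uxy
    hU hUphi
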